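/- Let n ≥ 1, let M = (I₄ + 2|ψ⁻⟩⟨ψ⁻|)/3 on ℂ²_{A_i} ⊗ ℂ²_{B_i}, and let Π = M^{⊗n} acting on ⊗_{i=1}^n (ℂ²_{A_i} ⊗ ℂ²_{B_i}). Then 0 ⪯ Π ⪯ I, Tr(Π (|ψ⁻⟩⟨ψ⁻|)^{⊗n}) = 1, and Tr(Π σ) ≤ (2/3)^n for every state σ on ⊗_{i=1}^n (ℂ²_{A_i} ⊗ ℂ²_{B_i}) whose image under the canonical regrouping isomorphism onto ((ℂ²)^{⊗n})_A ⊗ ((ℂ²)^{⊗n})_B (grouping all A qubits together and all B qubits together) is separable across the cut A:B. Consequently, ‖(|ψ⁻⟩⟨ψ⁻|)^{⊗n} − σ‖₁ ≥ 2(1 − (2/3)^n) for every such σ. -/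

import Mathlib

open scoped Kronecker ComplexOrder
open Matrix

/-- The trace norm (Schatten 1-norm) of a complex matrix: `Tr √(Xᴴ X)`. -/
noncomputable def traceNorm {n : Type*} [Fintype n] [DecidableEq n] (X : Matrix n n ℂ) : ℝ :=
  (((Matrix.posSemidef_conjTranspose_mul_self X).1.eigenvectorUnitary.1 *
      diagonal ((fun r : ℝ => (r : ℂ)) ∘ (Real.sqrt ·) ∘ (Matrix.posSemidef_conjTranspose_mul_self X).1.eigenvalues) *
      (star (Matrix.posSemidef_conjTranspose_mul_self X).1.eigenvectorUnitary : Matrix n n ℂ)).trace).re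

/-- A quantum state: a positive semidefinite matrix with unit trace. -/
def IsState {n : Type*} [Fintype n] (ρ : Matrix n n ℂ) : Prop :=
  ρ.PosSemidef ∧ ρ.trace = 1

/-- The outer product `|v⟩⟨v|`. -/
def outer {n : Type*} (v : n → ℂ) : Matrix n n ℂ :=
  Matrix.of fun i j => v i * star (v j)

/-- A unit vector. -/
def IsUnitVec {n : Type*} [Fintype n] (v : n → ℂ) : Prop :=
  ∑ i, star (v i) * v i = 1

/-- A bipartite separable state: a finite convex combination of tensor products of states. -/
def SeparableState {a b : Type*} [Fintype a] [Fintype b]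
    (σ : Matrix (a × b) (a × b) ℂ) : Prop :=
  ∃ (m : ℕ) (p : Fin m → ℝ) (σA : Fin m → Matrix a a ℂ) (σB : Fin m → Matrix b b ℂ),
    (∀ y, 0 ≤ p y) ∧ (∑ y, p y = 1) ∧ (∀ y, IsState (σA y)) ∧ (∀ y, IsState (σB y)) ∧
    σ = ∑ y, (p y : ℂ) • (σA y ⊗ₖ σB y)

/-- A maximally entangled unit vector `(1/√d) Σ_k |e_k⟩ ⊗ |f_k⟩` built from two
orthonormal bases `e`, `f` of `ℂ^d`. -/
def MaxEntangled {d : ℕ} (φ : Fin d × Fin d → ℂ) : Prop :=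
  ∃ e f : Fin d → Fin d → ℂ,
    (∀ i j, ∑ x, star (e i x) * e j x = if i = j then (1 : ℂ) else 0) ∧
    (∀ i j, ∑ x, star (f i x) * f j x = if i = j then (1 : ℂ) else 0) ∧
    ∀ x, φ x = ((Real.sqrt d : ℂ))⁻¹ * ∑ k, e k x.1 * f k x.2

/-- The singlet `|ψ⁻⟩ = (|0⟩⊗|1⟩ − |1⟩⊗|0⟩)/√2` in `ℂ² ⊗ ℂ²`. -/
noncomputable def singlet : Fin 2 × Fin 2 → ℂ := fun x =>
  if x = ((0 : Fin 2), (1 : Fin 2)) then ((Real.sqrt 2 : ℂ))⁻¹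
  else if x = ((1 : Fin 2), (0 : Fin 2)) then -((Real.sqrt 2 : ℂ))⁻¹
  else 0

/-- The operator `M = (I₄ + 2|ψ⁻⟩⟨ψ⁻|)/3` on `ℂ² ⊗ ℂ²`. -/
noncomputable def pauliTestOp : Matrix (Fin 2 × Fin 2) (Fin 2 × Fin 2) ℂ :=
  ((3 : ℂ))⁻¹ • ((1 : Matrix (Fin 2 × Fin 2) (Fin 2 × Fin 2) ℂ) + (2 : ℂ) • outer singlet)

/-- The `n`-fold tensor (Kronecker) power of a square matrix, acting on `n`-fold
tensor product indexed by functions `Fin n → α`. -/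
def tensorPow {α : Type*} (n : ℕ) (A : Matrix α α ℂ) :
    Matrix (Fin n → α) (Fin n → α) ℂ :=
  Matrix.of fun x y => ∏ i, A (x i) (y i)

/-- The canonical regrouping isomorphism sending an operator on
`⊗_{i=1}^n (ℂ²_{A_i} ⊗ ℂ²_{B_i})` to an operator on `((ℂ²)^{⊗n})_A ⊗ ((ℂ²)^{⊗n})_B`,
grouping all `A` qubits together and all `B` qubits together. -/
def regroup {n : ℕ} (σ : Matrix (Fin n → Fin 2 × Fin 2) (Fin n → Fin 2 × Fin 2) ℂ) :
    Matrix ((Fin n → Fin 2) × (Fin n → Fin 2)) ((Fin n → Fin 2) × (Fin n → Fin 2)) ℂ :=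
  Matrix.of fun x y =>
    σ (fun i => (x.1 i, x.2 i)) (fun i => (y.1 i, y.2 i))

/-!
Let `Γ` be the partial transpose on all `B` qubits. Applied to both factors it preserves
`Tr (X * Y)`, it maps separable states to positive semidefinite matrices (Peres), and
`M^Γ = (2/3) (I - |Φ⁺⟩⟨Φ⁺|)`. Hence for separable `σ`,
`Tr (Π σ) = (2/3)^n Tr ((I - |Φ⁺⟩⟨Φ⁺|)^{⊗n} σ^Γ) ≤ (2/3)^n Tr σ^Γ = (2/3)^n`.
For the trace norm, a traceless Hermitian `X` has `‖X‖₁ = Tr |X| = 2 Tr X⁺ ≥ 2 Tr (Π X)`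
whenever `0 ⪯ Π ⪯ I`.
-/

open scoped MatrixOrder

lemma Matrix.trace_submatrix_equiv {m n R : Type*} [Fintype m] [Fintype n] [AddCommMonoid R]
    (e : m ≃ n) (A : Matrix n n R) : (A.submatrix e e).trace = A.trace :=
  Fintype.sum_equiv e _ _ fun _ => rfl

section traceNorm

variable {ι : Type*} [Fintype ι] [DecidableEq ι]

lemma Matrix.PosSemidef.trace_mul_nonneg {A B : Matrix ι ι ℂ} (hA : A.PosSemidef)
    (hB : B.PosSemidef) : 0 ≤ (A * B).trace := by
  obtain ⟨C, rfl⟩ := CStarAlgebra.nonneg_iff_eq_star_mul_self.mp hB.nonneg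
  rw [← Matrix.mul_assoc, trace_mul_comm, ← Matrix.mul_assoc, star_eq_conjTranspose]
  exact (hA.mul_mul_conjTranspose_same C).trace_nonneg

lemma trace_mul_le_trace_of_posSemidef_one_sub {A B : Matrix ι ι ℂ} (hA : (1 - A).PosSemidef)
    (hB : B.PosSemidef) : (A * B).trace ≤ B.trace := by
  simpa [Matrix.sub_mul, trace_sub] using hA.trace_mul_nonneg hB

lemma traceNorm_eq_re_trace_abs (X : Matrix ι ι ℂ) : traceNorm X = (CFC.abs X).trace.re := by
  have hXX := posSemidef_conjTranspose_mul_self X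
  rw [CFC.abs, star_eq_conjTranspose, traceNorm, CFC.sqrt_eq_real_sqrt _ hXX.nonneg,
    cfcₙ_eq_cfc (hf0 := Real.sqrt_zero), hXX.1.cfc_eq, IsHermitian.cfc,
    Unitary.conjStarAlgAut_apply]
  rfl

lemma two_mul_re_trace_mul_le_traceNorm_add {P X : Matrix ι ι ℂ} (hP : P.PosSemidef)
    (hP1 : (1 - P).PosSemidef) (hX : X.IsHermitian) :
    2 * (P * X).trace.re ≤ traceNorm X + X.trace.re := by
  have hXsa : IsSelfAdjoint X := hX
  have hpos : (P * X).trace ≤ (X⁺).trace := by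
    calc (P * X).trace = (P * X⁺).trace - (P * X⁻).trace := by
          rw [← trace_sub, ← Matrix.mul_sub, CFC.posPart_sub_negPart X]
      _ ≤ (P * X⁺).trace :=
          sub_le_self _ (hP.trace_mul_nonneg (CFC.negPart_nonneg X).posSemidef)
      _ ≤ (X⁺).trace :=
          trace_mul_le_trace_of_posSemidef_one_sub hP1 (CFC.posPart_nonneg X).posSemidef
  have habs : (CFC.abs X).trace + X.trace = 2 * (X⁺).trace := by
    rw [← trace_add, CFC.abs_add_self X, trace_smul, nsmul_eq_mul, Nat.cast_ofNat]
  rw [traceNorm_eq_re_trace_abs, ← Complex.add_re, habs, Complex.mul_re]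
  norm_num
  linarith [(Complex.le_def.mp hpos).1]

end traceNorm

section tensorPow

variable {α : Type*}

lemma tensorPow_succ (n : ℕ) (A : Matrix α α ℂ) :
    tensorPow (n + 1) A = (A ⊗ₖ tensorPow n A).submatrix (Fin.consEquiv _).symm
      (Fin.consEquiv _).symm := by
  ext x y
  simp [tensorPow, Fin.prod_univ_succ, Fin.tail]

lemma tensorPow_smul (c : ℂ) (A : Matrix α α ℂ) (n : ℕ) :
    tensorPow n (c • A) = c ^ n • tensorPow n A := by
  ext x y
  simp [tensorPow, Finset.prod_mul_distrib]

variable [DecidableEq α]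

lemma tensorPow_zero (A : Matrix α α ℂ) : tensorPow 0 A = 1 := by
  ext x y
  simp [tensorPow, one_apply, Subsingleton.elim x y]

variable [Fintype α]

lemma trace_tensorPow_mul (A B : Matrix α α ℂ) (n : ℕ) :
    (tensorPow n A * tensorPow n B).trace = (A * B).trace ^ n := by
  induction n with
  | zero => simp [tensorPow_zero]
  | succ n ih =>
    rw [tensorPow_succ, tensorPow_succ, submatrix_mul_equiv, trace_submatrix_equiv,
      ← mul_kronecker_mul, trace_kronecker, ih, pow_succ']

lemma trace_tensorPow (A : Matrix α α ℂ) (n : ℕ) : (tensorPow n A).trace = A.trace ^ n := by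
  induction n with
  | zero => simp [tensorPow_zero]
  | succ n ih => rw [tensorPow_succ, trace_submatrix_equiv, trace_kronecker, ih, pow_succ']

lemma posSemidef_tensorPow {A : Matrix α α ℂ} (hA : A.PosSemidef) (n : ℕ) :
    (tensorPow n A).PosSemidef := by
  induction n with
  | zero => simpa [tensorPow_zero] using PosSemidef.one
  | succ n ih => simpa [tensorPow_succ] using hA.kronecker ih

lemma posSemidef_one_sub_tensorPow {A : Matrix α α ℂ} (hA : A.PosSemidef)
    (hA1 : (1 - A).PosSemidef) (n : ℕ) : (1 - tensorPow n A).PosSemidef := by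
  induction n with
  | zero => simpa [tensorPow_zero] using PosSemidef.zero
  | succ n ih =>
    set e := (Fin.consEquiv fun _ : Fin (n + 1) => α).symm
    have hsplit : 1 - A ⊗ₖ tensorPow n A = (1 - A) ⊗ₖ 1 + A ⊗ₖ (1 - tensorPow n A) := by
      rw [← one_kronecker_one]
      ext ⟨i, j⟩ ⟨k, l⟩
      simp only [Matrix.sub_apply, Matrix.add_apply, kroneckerMap_apply]
      ring
    have hreindex : 1 - tensorPow (n + 1) A = (1 - A ⊗ₖ tensorPow n A).submatrix e e := by
      rw [tensorPow_succ, ← submatrix_one_equiv e]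
      rfl
    rw [hreindex, hsplit]
    exact ((hA1.kronecker PosSemidef.one).add (hA.kronecker ih)).submatrix _

end tensorPow

section outer

variable {ι : Type*}

lemma outer_eq_vecMulVec (v : ι → ℂ) : outer v = vecMulVec v (star v) := rfl

variable [Fintype ι]

lemma posSemidef_outer (v : ι → ℂ) : (outer v).PosSemidef :=
  posSemidef_vecMulVec_self_star v

lemma trace_outer {v : ι → ℂ} (hv : IsUnitVec v) : (outer v).trace = 1 := by
  rw [outer_eq_vecMulVec, trace_vecMulVec, dotProduct_comm]
  exact hv

lemma outer_mul_self {v : ι → ℂ} (hv : IsUnitVec v) : outer v * outer v = outer v := by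
  have hv' : star v ⬝ᵥ v = 1 := hv
  rw [outer_eq_vecMulVec, vecMulVec_mul_vecMulVec, hv', one_smul]

lemma isStarProjection_outer {v : ι → ℂ} (hv : IsUnitVec v) : IsStarProjection (outer v) :=
  ⟨outer_mul_self hv, (posSemidef_outer v).isHermitian⟩

variable [DecidableEq ι] in
lemma posSemidef_one_sub_outer {v : ι → ℂ} (hv : IsUnitVec v) : (1 - outer v).PosSemidef :=
  (isStarProjection_outer hv).one_sub_nonneg.posSemidef

end outer

section partialTranspose

variable {a b R : Type*}

def partialTranspose (A : Matrix (a × b) (a × b) R) : Matrix (a × b) (a × b) R :=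
  of fun x y => A (x.1, y.2) (y.1, x.2)

variable [Fintype a] [Fintype b]

lemma trace_partialTranspose [AddCommMonoid R] (A : Matrix (a × b) (a × b) R) :
    (partialTranspose A).trace = A.trace := rfl

lemma trace_partialTranspose_mul [AddCommMonoid R] [Mul R] (A B : Matrix (a × b) (a × b) R) :
    (partialTranspose A * partialTranspose B).trace = (A * B).trace := by
  have trace_mul (C D : Matrix (a × b) (a × b) R) :
      (C * D).trace = ∑ p : (a × b) × (a × b), C p.1 p.2 * D p.2 p.1 := by
    simp only [trace, diag, mul_apply, Fintype.sum_prod_type]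
  let swapSecond : Equiv.Perm ((a × b) × (a × b)) :=
    Function.Involutive.toPerm (fun p => ((p.1.1, p.2.2), (p.2.1, p.1.2))) fun _ => rfl
  rw [trace_mul, trace_mul]
  exact Fintype.sum_equiv swapSecond _ _ fun _ => rfl

end partialTranspose

lemma SeparableState.posSemidef_partialTranspose {a b : Type*} [Fintype a] [Fintype b]
    {σ : Matrix (a × b) (a × b) ℂ} (hσ : SeparableState σ) :
    (partialTranspose σ).PosSemidef := by
  obtain ⟨m, p, σA, σB, hp, -, hA, hB, rfl⟩ := hσ
  have hPT : partialTranspose (∑ y, (p y : ℂ) • (σA y ⊗ₖ σB y))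
      = ∑ y, (p y : ℂ) • (σA y ⊗ₖ (σB y)ᵀ) := by
    ext x z
    simp [partialTranspose, Matrix.sum_apply]
  rw [hPT]
  exact posSemidef_sum _ fun y _ =>
    ((hA y).1.kronecker (hB y).1.transpose).smul (Complex.zero_le_real.mpr (hp y))

section regroup

variable {n : ℕ}

lemma regroup_eq_submatrix (σ : Matrix (Fin n → Fin 2 × Fin 2) (Fin n → Fin 2 × Fin 2) ℂ) :
    regroup σ = σ.submatrix (Equiv.arrowProdEquivProdArrow _ _ _).symm
      (Equiv.arrowProdEquivProdArrow _ _ _).symm := rfl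

lemma trace_regroup_mul (A B : Matrix (Fin n → Fin 2 × Fin 2) (Fin n → Fin 2 × Fin 2) ℂ) :
    (regroup A * regroup B).trace = (A * B).trace := by
  rw [regroup_eq_submatrix, regroup_eq_submatrix, submatrix_mul_equiv, trace_submatrix_equiv]

lemma trace_regroup (A : Matrix (Fin n → Fin 2 × Fin 2) (Fin n → Fin 2 × Fin 2) ℂ) :
    (regroup A).trace = A.trace := by
  rw [regroup_eq_submatrix, trace_submatrix_equiv]

lemma regroup_smul (c : ℂ)
    (A : Matrix (Fin n → Fin 2 × Fin 2) (Fin n → Fin 2 × Fin 2) ℂ) :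
    regroup (c • A) = c • regroup A := rfl

lemma posSemidef_one_sub_regroup
    {A : Matrix (Fin n → Fin 2 × Fin 2) (Fin n → Fin 2 × Fin 2) ℂ}
    (hA : (1 - A).PosSemidef) : (1 - regroup A).PosSemidef := by
  rw [regroup_eq_submatrix, ← submatrix_one_equiv (Equiv.arrowProdEquivProdArrow _ _ _).symm]
  exact hA.submatrix _

lemma partialTranspose_regroup_tensorPow (A : Matrix (Fin 2 × Fin 2) (Fin 2 × Fin 2) ℂ) :
    partialTranspose (regroup (tensorPow n A)) = regroup (tensorPow n (partialTranspose A)) := rfl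

end regroup

lemma inv_sqrt_two_mul_self : ((Real.sqrt 2 : ℂ))⁻¹ * ((Real.sqrt 2 : ℂ))⁻¹ = 2⁻¹ := by
  rw [← mul_inv, ← Complex.ofReal_mul, Real.mul_self_sqrt zero_le_two, Complex.ofReal_ofNat]

lemma isUnitVec_singlet : IsUnitVec singlet := by
  rw [IsUnitVec, Fintype.sum_prod_type]
  norm_num [singlet, Fin.sum_univ_succ, inv_sqrt_two_mul_self]

noncomputable def phiPlus : Fin 2 × Fin 2 → ℂ := fun x =>
  if x.1 = x.2 then ((Real.sqrt 2 : ℂ))⁻¹ else 0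

lemma isUnitVec_phiPlus : IsUnitVec phiPlus := by
  rw [IsUnitVec, Fintype.sum_prod_type]
  simp [phiPlus, inv_sqrt_two_mul_self]

lemma partialTranspose_pauliTestOp :
    partialTranspose pauliTestOp = (2 / 3 : ℂ) • (1 - outer phiPlus) := by
  ext ⟨i, j⟩ ⟨k, l⟩
  fin_cases i <;> fin_cases j <;> fin_cases k <;> fin_cases l <;>
    norm_num [partialTranspose, pauliTestOp, outer, phiPlus, singlet, one_apply,
      inv_sqrt_two_mul_self]

lemma one_sub_pauliTestOp : 1 - pauliTestOp = (2 / 3 : ℂ) • (1 - outer singlet) := by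
  rw [pauliTestOp]
  ext i j
  simp only [Matrix.sub_apply, Matrix.smul_apply, Matrix.add_apply, smul_eq_mul]
  ring

lemma posSemidef_pauliTestOp : pauliTestOp.PosSemidef :=
  (PosSemidef.one.add ((posSemidef_outer singlet).smul (by positivity))).smul (by positivity)

lemma posSemidef_one_sub_pauliTestOp : (1 - pauliTestOp).PosSemidef := by
  rw [one_sub_pauliTestOp]
  exact (posSemidef_one_sub_outer isUnitVec_singlet).smul (by positivity)

lemma trace_pauliTestOp_mul_outer_singlet : (pauliTestOp * outer singlet).trace = 1 := by
  rw [pauliTestOp, smul_mul_assoc, add_mul, one_mul, smul_mul_assoc,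
    outer_mul_self isUnitVec_singlet, trace_smul, trace_add, trace_smul,
    trace_outer isUnitVec_singlet]
  norm_num

lemma trace_tensorPow_pauliTestOp_mul_le {n : ℕ}
    {σ : Matrix (Fin n → Fin 2 × Fin 2) (Fin n → Fin 2 × Fin 2) ℂ}
    (hσ : IsState σ) (hsep : SeparableState (regroup σ)) :
    (tensorPow n pauliTestOp * σ).trace ≤ (((2 / 3 : ℝ) ^ n : ℝ) : ℂ) := by
  set τ := partialTranspose (regroup σ)
  set Q := regroup (tensorPow n (1 - outer phiPlus))
  have hQ : (1 - Q).PosSemidef := posSemidef_one_sub_regroup <|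
    posSemidef_one_sub_tensorPow (posSemidef_one_sub_outer isUnitVec_phiPlus)
      (by simpa using posSemidef_outer phiPlus) n
  calc (tensorPow n pauliTestOp * σ).trace
      = (partialTranspose (regroup (tensorPow n pauliTestOp)) * τ).trace := by
        rw [trace_partialTranspose_mul, trace_regroup_mul]
    _ = (2 / 3 : ℂ) ^ n * (Q * τ).trace := by
        rw [partialTranspose_regroup_tensorPow, partialTranspose_pauliTestOp, tensorPow_smul,
          regroup_smul, smul_mul_assoc, trace_smul, smul_eq_mul]
    _ ≤ (2 / 3 : ℂ) ^ n * τ.trace :=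
        mul_le_mul_of_nonneg_left
          (trace_mul_le_trace_of_posSemidef_one_sub hQ hsep.posSemidef_partialTranspose)
          (by positivity)
    _ = (((2 / 3 : ℝ) ^ n : ℝ) : ℂ) := by
        rw [trace_partialTranspose, trace_regroup, hσ.2, mul_one]
        push_cast
        ring

theorem stmt5_general (n : ℕ) :
    (tensorPow n pauliTestOp).PosSemidef ∧
    ((1 : Matrix (Fin n → Fin 2 × Fin 2) (Fin n → Fin 2 × Fin 2) ℂ)
        - tensorPow n pauliTestOp).PosSemidef ∧
    (tensorPow n pauliTestOp * tensorPow n (outer singlet)).trace = 1 ∧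
    (∀ σ : Matrix (Fin n → Fin 2 × Fin 2) (Fin n → Fin 2 × Fin 2) ℂ,
      IsState σ → SeparableState (regroup σ) →
      (tensorPow n pauliTestOp * σ).trace ≤ (((2 / 3 : ℝ) ^ n : ℝ) : ℂ)) ∧
    (∀ σ : Matrix (Fin n → Fin 2 × Fin 2) (Fin n → Fin 2 × Fin 2) ℂ,
      IsState σ → SeparableState (regroup σ) →
      2 * (1 - (2 / 3 : ℝ) ^ n) ≤ traceNorm (tensorPow n (outer singlet) - σ)) := by
  have hTestNonneg := posSemidef_tensorPow posSemidef_pauliTestOp n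
  have hTestLeOne :=
    posSemidef_one_sub_tensorPow posSemidef_pauliTestOp posSemidef_one_sub_pauliTestOp n
  have hsinglet : (tensorPow n pauliTestOp * tensorPow n (outer singlet)).trace = 1 := by
    rw [trace_tensorPow_mul, trace_pauliTestOp_mul_outer_singlet, one_pow]
  refine ⟨hTestNonneg, hTestLeOne, hsinglet,
    fun σ hσ hsep => trace_tensorPow_pauliTestOp_mul_le hσ hsep, ?_⟩
  intro σ hσ hsep
  have hX : (tensorPow n (outer singlet) - σ).IsHermitian :=
    (posSemidef_tensorPow (posSemidef_outer singlet) n).isHermitian.sub hσ.1.isHermitian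
  have htrX : (tensorPow n (outer singlet) - σ).trace = 0 := by
    rw [trace_sub, trace_tensorPow, trace_outer isUnitVec_singlet, one_pow, hσ.2, sub_self]
  have hbound := Complex.le_def.mp (trace_tensorPow_pauliTestOp_mul_le hσ hsep)
  have key := two_mul_re_trace_mul_le_traceNorm_add hTestNonneg hTestLeOne hX
  rw [htrX, Matrix.mul_sub, trace_sub, hsinglet] at key
  simp only [Complex.ofReal_re, Complex.sub_re, Complex.one_re, Complex.zero_re] at hbound key
  linarith [hbound.1]

/-- With `M = (I₄ + 2|ψ⁻⟩⟨ψ⁻|)/3` and `Π = M^{⊗n}`: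
`0 ⪯ Π ⪯ I`, `Tr(Π (|ψ⁻⟩⟨ψ⁻|)^{⊗n}) = 1`, and `Tr(Π σ) ≤ (2/3)^n` for every state `σ`
whose regrouping onto the `A:B` cut is separable; consequently
`‖(|ψ⁻⟩⟨ψ⁻|)^{⊗n} − σ‖₁ ≥ 2(1 − (2/3)^n)` for every such `σ`. -/
theorem stmt5 (n : ℕ) (hn : 1 ≤ n) :
    (tensorPow n pauliTestOp).PosSemidef ∧
    ((1 : Matrix (Fin n → Fin 2 × Fin 2) (Fin n → Fin 2 × Fin 2) ℂ)
        - tensorPow n pauliTestOp).PosSemidef ∧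
    (tensorPow n pauliTestOp * tensorPow n (outer singlet)).trace = 1 ∧
    (∀ σ : Matrix (Fin n → Fin 2 × Fin 2) (Fin n → Fin 2 × Fin 2) ℂ,
      IsState σ → SeparableState (regroup σ) →
      (tensorPow n pauliTestOp * σ).trace ≤ (((2 / 3 : ℝ) ^ n : ℝ) : ℂ)) ∧
    (∀ σ : Matrix (Fin n → Fin 2 × Fin 2) (Fin n → Fin 2 × Fin 2) ℂ,
      IsState σ → SeparableState (regroup σ) →
      2 * (1 - (2 / 3 : ℝ) ^ n) ≤ traceNorm (tensorPow n (outer singlet) - σ)) :=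
  stmt5_general n
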